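/- For every compact set K ⊂ ℂ, the metric space (X(K), d_X) is separable. -/

import Mathlib

noncomputable section

open Set Filter Metric MeasureTheory
open scoped Classical

/-- A loop: a continuous `1`-periodic map `ℝ → ℂ`, viewed as a continuous map from the
circle `S¹ = ℝ/ℤ` to the complex plane. -/
structure Loop where
  toFun : ℝ → ℂ
  continuous_toFun : Continuous toFun
  periodic_toFun : Function.Periodic toFun 1

/-- Lifts of orientation-preserving homeomorphisms of the circle `ℝ/ℤ`: continuous strictly
increasing maps of `ℝ` commuting with translation by `1`. -/
def CircleMaps : Set (ℝ → ℝ) :=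
  {φ | Continuous φ ∧ StrictMono φ ∧ ∀ t, φ (t + 1) = φ t + 1}

/-- The supremum distance between loops, up to orientation-preserving reparametrization:
`d_Γ(γ, γ') = inf_{φ,ψ} sup_t |γ(φ t) - γ'(ψ t)|`. -/
def dGamma (γ γ' : Loop) : ℝ :=
  sInf {r : ℝ | 0 ≤ r ∧ ∃ φ ∈ CircleMaps, ∃ ψ ∈ CircleMaps,
    ∀ t : ℝ, dist (γ.toFun (φ t)) (γ'.toFun (ψ t)) ≤ r}

/-- Loops at `d_Γ`-distance zero are identified. -/
def loopRel (γ γ' : Loop) : Prop := dGamma γ γ' = 0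

/-- The space `Γ₀` of loop classes: loops modulo the relation `d_Γ = 0`. -/
def LoopClass : Type := Quot loopRel

/-- The class of a loop in `Γ₀`. -/
def Loop.cls (γ : Loop) : LoopClass := Quot.mk loopRel γ

namespace LoopClass

/-- The image of a loop class (all representatives have the same image). -/
def image (c : LoopClass) : Set ℂ := ⋃ γ ∈ {γ : Loop | γ.cls = c}, Set.range γ.toFun

/-- The diameter of a loop class. -/
def diam (c : LoopClass) : ℝ := Metric.diam c.image

/-- A loop class is trivial if its image is a single point. -/
def IsTrivial (c : LoopClass) : Prop := ∃ z : ℂ, c.image = {z}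

/-- A loop class is simple if it has an injective representative. -/
def IsSimple (c : LoopClass) : Prop :=
  ∃ γ : Loop, γ.cls = c ∧ ∀ s t : ℝ, s ∈ Set.Ico (0:ℝ) 1 → t ∈ Set.Ico (0:ℝ) 1 →
    γ.toFun s = γ.toFun t → s = t

/-- The induced distance `d_Γ` on loop classes. -/
def dist (c c' : LoopClass) : ℝ :=
  sInf {r : ℝ | ∃ γ γ' : Loop, γ.cls = c ∧ γ'.cls = c' ∧ dGamma γ γ' ≤ r}

end LoopClass

/-- The space `X(K)` of at most countable, locally finite collections of nontrivial loop
classes with images contained in `K`. -/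
def LoopCollections (K : Set ℂ) : Set (Set LoopClass) :=
  {F | F.Countable ∧ (∀ c ∈ F, ¬ c.IsTrivial ∧ c.image ⊆ K) ∧
    ∀ ε : ℝ, 0 < ε → {c ∈ F | ε < c.diam}.Finite}

/-- A partial matching between the collections `F` and `G`: a set of pairs in which every
element of `F` and every element of `G` occurs at most once. -/
def IsMatching (F G : Set LoopClass) (π : Set (LoopClass × LoopClass)) : Prop :=
  (∀ p ∈ π, p.1 ∈ F ∧ p.2 ∈ G) ∧
  (∀ p ∈ π, ∀ q ∈ π, p.1 = q.1 → p = q) ∧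
  (∀ p ∈ π, ∀ q ∈ π, p.2 = q.2 → p = q)

/-- The elements of `F` and `G` not matched by `π`. -/
def unmatched (F G : Set LoopClass) (π : Set (LoopClass × LoopClass)) : Set LoopClass :=
  {c ∈ F | ∀ p ∈ π, p.1 ≠ c} ∪ {c ∈ G | ∀ p ∈ π, p.2 ≠ c}

/-- The distance `d_X` between loop collections: the infimum over partial matchings of the
maximum of the matched `d_Γ`-distances and of half the diameters of unmatched loops. -/
def dX (F G : Set LoopClass) : ℝ :=
  sInf {r : ℝ | 0 ≤ r ∧ ∃ π : Set (LoopClass × LoopClass), IsMatching F G π ∧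
    (∀ p ∈ π, LoopClass.dist p.1 p.2 ≤ r) ∧
    ∀ c ∈ unmatched F G π, c.diam / 2 ≤ r}

/-- The space `X(K)`, as a type. -/
def XSpace (K : Set ℂ) : Type := {F : Set LoopClass // F ∈ LoopCollections K}

namespace XSpace

/-- The metric `d_X` on `X(K)`. -/
def dist {K : Set ℂ} (F G : XSpace K) : ℝ := dX F.1 G.1

/-- `d_X`-open subsets of `X(K)`. -/
def IsOpen {K : Set ℂ} (U : Set (XSpace K)) : Prop :=
  ∀ F ∈ U, ∃ ε : ℝ, 0 < ε ∧ ∀ G : XSpace K, XSpace.dist F G < ε → G ∈ U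

/-- The Borel σ-algebra of the metric space `(X(K), d_X)`. -/
instance measurableSpace {K : Set ℂ} : MeasurableSpace (XSpace K) :=
  MeasurableSpace.generateFrom {U | XSpace.IsOpen U}

/-- Bounded `d_X`-continuous real test functions on `X(K)`. -/
def IsBddContinuous {K : Set ℂ} (f : XSpace K → ℝ) : Prop :=
  (∃ M : ℝ, ∀ F, |f F| ≤ M) ∧
  ∀ F : XSpace K, ∀ ε : ℝ, 0 < ε → ∃ ρ : ℝ, 0 < ρ ∧
    ∀ G : XSpace K, XSpace.dist F G < ρ → |f G - f F| < ε

end XSpace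

/-- Weak convergence, as `δ → 0⁺`, of a `δ`-indexed family of Borel measures on
`(X(K), d_X)`: integrals of bounded `d_X`-continuous functions converge. -/
def WeakLimit {K : Set ℂ} (L : ℝ → Measure (XSpace K)) (μ : Measure (XSpace K)) : Prop :=
  ∀ f : XSpace K → ℝ, XSpace.IsBddContinuous f →
    Tendsto (fun δ : ℝ => ∫ F, f F ∂(L δ)) (nhdsWithin 0 (Set.Ioi 0))
      (nhds (∫ F, f F ∂μ))

/-- The Dirac mass at a loop collection (zero if the collection is not an element
of `X(K)`). -/
def diracAt (K : Set ℂ) (S : Set LoopClass) : Measure (XSpace K) :=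
  if h : S ∈ LoopCollections K then Measure.dirac (⟨S, h⟩ : XSpace K) else 0

/-! The loops in `K` contain a countable family that is uniformly dense among them, since their
restrictions to `[0, 1]` lie in the separable space `C([0, 1], ℂ)`. Given `F` and `ε`, replace each
of the finitely many loops of `F` of diameter `> ε` by a nearby loop of this family and drop the
others, which costs at most `ε / 2`. A fine enough approximation keeps the approximating classes
distinct and nontrivial, so they form a finite element of `X(K)`; and there are only countably
many finite sets of classes of the family. -/

open Topology

namespace CircleMaps

theorem id_mem : (id : ℝ → ℝ) ∈ CircleMaps :=
  ⟨continuous_id, strictMono_id, fun _ => rfl⟩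

theorem comp_mem {φ ψ : ℝ → ℝ} (hφ : φ ∈ CircleMaps) (hψ : ψ ∈ CircleMaps) :
    φ ∘ ψ ∈ CircleMaps :=
  ⟨hφ.1.comp hψ.1, hφ.2.1.comp hψ.2.1, fun t => by
    simp only [Function.comp_apply, hψ.2.2, hφ.2.2]⟩

theorem surjective {φ : ℝ → ℝ} (hφ : φ ∈ CircleMaps) : φ.Surjective :=
  (CircleDeg1Lift.continuous_iff_surjective (f := ⟨⟨φ, hφ.2.1.monotone⟩, hφ.2.2⟩)).1 hφ.1

theorem exists_rightInverse {φ : ℝ → ℝ} (hφ : φ ∈ CircleMaps) :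
    ∃ χ ∈ CircleMaps, Function.RightInverse χ φ := by
  let e : ℝ ≃o ℝ := hφ.2.1.orderIsoOfSurjective φ (surjective hφ)
  refine ⟨e.symm, ⟨e.symm.continuous, e.symm.strictMono, fun t => ?_⟩, e.apply_symm_apply⟩
  rw [e.symm_apply_eq]
  exact (congrArg (· + 1) (e.apply_symm_apply t)).symm.trans (hφ.2.2 _).symm

end CircleMaps

namespace Loop

instance : Inhabited Loop :=
  ⟨⟨fun _ => 0, continuous_const, fun _ => rfl⟩⟩

theorem apply_fract (γ : Loop) (t : ℝ) : γ.toFun (Int.fract t) = γ.toFun t := by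
  have h := γ.periodic_toFun.sub_int_mul_eq (x := t) ⌊t⌋
  rw [mul_one] at h
  exact h

theorem isCompact_range (γ : Loop) : IsCompact (range γ.toFun) :=
  γ.periodic_toFun.compact_of_continuous one_ne_zero γ.continuous_toFun

def restrictIcc (γ : Loop) : C(Icc (0 : ℝ) 1, ℂ) :=
  ⟨fun t => γ.toFun t, γ.continuous_toFun.comp continuous_subtype_val⟩

theorem dist_apply_le_dist_restrictIcc (γ γ' : Loop) (t : ℝ) :
    dist (γ.toFun t) (γ'.toFun t) ≤ dist γ.restrictIcc γ'.restrictIcc := by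
  rw [← γ.apply_fract, ← γ'.apply_fract]
  exact ContinuousMap.dist_apply_le_dist (f := γ.restrictIcc) (g := γ'.restrictIcc)
    (⟨Int.fract t, Int.fract_nonneg t, (Int.fract_lt_one t).le⟩ : Icc (0 : ℝ) 1)

theorem cls_surjective : Function.Surjective Loop.cls :=
  Quot.exists_rep

instance : Nonempty LoopClass :=
  ⟨(default : Loop).cls⟩

end Loop

theorem dGamma_le {γ γ' : Loop} {r : ℝ} (hr : 0 ≤ r) {φ ψ : ℝ → ℝ} (hφ : φ ∈ CircleMaps)
    (hψ : ψ ∈ CircleMaps) (h : ∀ t, dist (γ.toFun (φ t)) (γ'.toFun (ψ t)) ≤ r) :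
    dGamma γ γ' ≤ r :=
  csInf_le ⟨0, fun _ hs => hs.1⟩ ⟨hr, φ, hφ, ψ, hψ, h⟩

theorem dGamma_nonneg (γ γ' : Loop) : 0 ≤ dGamma γ γ' :=
  Real.sInf_nonneg fun _ hr => hr.1

theorem dGamma_le_dist_restrictIcc (γ γ' : Loop) :
    dGamma γ γ' ≤ dist γ.restrictIcc γ'.restrictIcc :=
  dGamma_le dist_nonneg CircleMaps.id_mem CircleMaps.id_mem (γ.dist_apply_le_dist_restrictIcc γ')

theorem exists_circleMaps_of_dGamma_lt {γ γ' : Loop} {r : ℝ} (h : dGamma γ γ' < r) :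
    ∃ φ ∈ CircleMaps, ∃ ψ ∈ CircleMaps, ∀ t, dist (γ.toFun (φ t)) (γ'.toFun (ψ t)) < r := by
  obtain ⟨s, ⟨-, φ, hφ, ψ, hψ, hs⟩, hsr⟩ := exists_lt_of_csInf_lt
    (by exact ⟨_, dist_nonneg, id, CircleMaps.id_mem, id, CircleMaps.id_mem,
      γ.dist_apply_le_dist_restrictIcc γ'⟩) h
  exact ⟨φ, hφ, ψ, hψ, fun t => (hs t).trans_lt hsr⟩

theorem dGamma_self (γ : Loop) : dGamma γ γ = 0 :=
  le_antisymm (dGamma_le le_rfl CircleMaps.id_mem CircleMaps.id_mem fun t => by simp)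
    (dGamma_nonneg γ γ)

theorem dGamma_comm (γ γ' : Loop) : dGamma γ γ' = dGamma γ' γ := by
  unfold dGamma
  congr 1
  ext r
  constructor <;> rintro ⟨hr, φ, hφ, ψ, hψ, h⟩ <;>
    exact ⟨hr, ψ, hψ, φ, hφ, fun t => by rw [dist_comm]; exact h t⟩

theorem dGamma_triangle (γ₁ γ₂ γ₃ : Loop) :
    dGamma γ₁ γ₃ ≤ dGamma γ₁ γ₂ + dGamma γ₂ γ₃ := by
  refine le_of_forall_pos_le_add fun η hη => ?_
  obtain ⟨φ₁, hφ₁, ψ₁, hψ₁, h₁⟩ :=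
    exists_circleMaps_of_dGamma_lt (lt_add_of_pos_right (dGamma γ₁ γ₂) (half_pos hη))
  obtain ⟨φ₂, hφ₂, ψ₂, hψ₂, h₂⟩ :=
    exists_circleMaps_of_dGamma_lt (lt_add_of_pos_right (dGamma γ₂ γ₃) (half_pos hη))
  obtain ⟨χ, hχ, hψ₁χ⟩ := CircleMaps.exists_rightInverse hψ₁
  -- reparametrizing the first pair by `χ ∘ φ₂` makes its `γ₂`-parameter equal to `φ₂`
  have key : dGamma γ₁ γ₃ ≤ (dGamma γ₁ γ₂ + η / 2) + (dGamma γ₂ γ₃ + η / 2) := by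
    refine dGamma_le (by linarith [dGamma_nonneg γ₁ γ₂, dGamma_nonneg γ₂ γ₃])
      (CircleMaps.comp_mem hφ₁ (CircleMaps.comp_mem hχ hφ₂)) hψ₂ fun t => ?_
    have h₁' := h₁ (χ (φ₂ t))
    rw [hψ₁χ] at h₁'
    exact (dist_triangle _ _ _).trans (add_le_add h₁'.le (h₂ t).le)
  linarith

theorem range_subset_cthickening_dGamma (γ γ' : Loop) :
    range γ.toFun ⊆ cthickening (dGamma γ γ') (range γ'.toFun) := by
  rw [cthickening_eq_iInter_cthickening]
  rintro _ ⟨s, rfl⟩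
  refine mem_iInter₂.2 fun r hr => ?_
  obtain ⟨φ, hφ, ψ, -, h⟩ := exists_circleMaps_of_dGamma_lt hr
  obtain ⟨t, rfl⟩ := CircleMaps.surjective hφ s
  exact mem_cthickening_of_dist_le _ _ r _ ⟨ψ t, rfl⟩ (h t).le

theorem range_subset_of_dGamma_eq_zero {γ γ' : Loop} (h : dGamma γ γ' = 0) :
    range γ.toFun ⊆ range γ'.toFun := by
  simpa [h, cthickening_zero, γ'.isCompact_range.isClosed.closure_eq] using
    range_subset_cthickening_dGamma γ γ'

theorem diam_range_le_add_dGamma (γ γ' : Loop) :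
    diam (range γ.toFun) ≤ diam (range γ'.toFun) + 2 * dGamma γ γ' :=
  (diam_mono (range_subset_cthickening_dGamma γ γ') γ'.isCompact_range.isBounded.cthickening).trans
    (diam_cthickening_le _ (dGamma_nonneg γ γ'))

theorem cls_eq_iff {γ γ' : Loop} : γ.cls = γ'.cls ↔ dGamma γ γ' = 0 := by
  refine ⟨fun h => ?_, fun h => Quot.sound h⟩
  obtain hrel := Quot.eqvGen_exact h
  clear h
  induction hrel with
  | rel _ _ h => exact h
  | refl γ => exact dGamma_self γ
  | symm _ _ _ ih => rw [dGamma_comm]; exact ih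
  | trans _ _ _ _ _ ih₁ ih₂ =>
    exact le_antisymm ((dGamma_triangle _ _ _).trans (by rw [ih₁, ih₂, add_zero]))
      (dGamma_nonneg _ _)

theorem image_cls (γ : Loop) : γ.cls.image = range γ.toFun := by
  refine Subset.antisymm (iUnion₂_subset fun γ' (h : γ'.cls = γ.cls) => ?_)
    (subset_iUnion₂ (s := fun γ' (_ : γ'.cls = γ.cls) => range γ'.toFun) γ rfl)
  exact range_subset_of_dGamma_eq_zero (cls_eq_iff.1 h)

theorem LoopClass.dist_cls (γ γ' : Loop) : LoopClass.dist γ.cls γ'.cls = dGamma γ γ' := by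
  refine le_antisymm (csInf_le ?_ ⟨γ, γ', rfl, rfl, le_rfl⟩)
    (le_csInf ⟨_, γ, γ', rfl, rfl, le_rfl⟩ ?_)
  · exact ⟨0, fun _ ⟨a, b, _, _, hab⟩ => (dGamma_nonneg a b).trans hab⟩
  · rintro r ⟨a, b, ha, hb, hab⟩
    calc dGamma γ γ' ≤ dGamma γ a + (dGamma a b + dGamma b γ') :=
          (dGamma_triangle _ _ _).trans (add_le_add le_rfl (dGamma_triangle _ _ _))
      _ = dGamma a b := by rw [cls_eq_iff.1 ha.symm, cls_eq_iff.1 hb, zero_add, add_zero]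
      _ ≤ r := hab

instance : MetricSpace LoopClass where
  dist := LoopClass.dist
  dist_self := Quot.ind fun γ => (LoopClass.dist_cls γ γ).trans (dGamma_self γ)
  dist_comm := Quot.ind fun γ => Quot.ind fun γ' => by
    show LoopClass.dist γ.cls γ'.cls = LoopClass.dist γ'.cls γ.cls
    rw [LoopClass.dist_cls, LoopClass.dist_cls, dGamma_comm]
  dist_triangle := Quot.ind fun γ₁ => Quot.ind fun γ₂ => Quot.ind fun γ₃ => by
    show LoopClass.dist γ₁.cls γ₃.cls ≤
      LoopClass.dist γ₁.cls γ₂.cls + LoopClass.dist γ₂.cls γ₃.cls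
    simpa only [LoopClass.dist_cls] using dGamma_triangle γ₁ γ₂ γ₃
  eq_of_dist_eq_zero {c d} := Quot.induction_on₂ c d fun γ γ' h =>
    cls_eq_iff.2 ((LoopClass.dist_cls γ γ').symm.trans h)

theorem LoopClass.diam_le_diam_add_dist (c d : LoopClass) :
    c.diam ≤ d.diam + 2 * Dist.dist c d := by
  obtain ⟨γ, rfl⟩ := Loop.cls_surjective c
  obtain ⟨γ', rfl⟩ := Loop.cls_surjective d
  have h := diam_range_le_add_dGamma γ γ'
  rw [← LoopClass.dist_cls, ← image_cls, ← image_cls] at h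
  exact h

theorem LoopClass.not_isTrivial_of_two_mul_dist_lt {c d : LoopClass}
    (h : 2 * Dist.dist c d < c.diam) : ¬ d.IsTrivial := by
  rintro ⟨z, hz⟩
  have hd : d.diam = 0 := by rw [LoopClass.diam, hz, diam_singleton]
  linarith [c.diam_le_diam_add_dist d]

theorem exists_countable_dense_classes (K : Set ℂ) :
    ∃ C : Set LoopClass, C.Countable ∧ (∀ d ∈ C, d.image ⊆ K) ∧
      ∀ c : LoopClass, c.image ⊆ K → ∀ δ > 0, ∃ d ∈ C, dist c d < δ := by
  obtain ⟨T, hTL, hTc, hLT⟩ := (TopologicalSpace.IsSeparable.of_separableSpace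
    (Loop.restrictIcc '' {γ | range γ.toFun ⊆ K})).exists_countable_dense_subset
  choose! β hβK hβT using fun x (hx : x ∈ T) => hTL hx
  refine ⟨(fun x => (β x).cls) '' T, hTc.image _, ?_, fun c hc δ hδ => ?_⟩
  · rintro _ ⟨x, hx, rfl⟩
    rw [image_cls]
    exact hβK x hx
  obtain ⟨γ, rfl⟩ := Loop.cls_surjective c
  rw [image_cls] at hc
  obtain ⟨x, hxT, hx⟩ := Metric.mem_closure_iff.1 (hLT ⟨γ, hc, rfl⟩) δ hδ
  refine ⟨_, ⟨x, hxT, rfl⟩, ?_⟩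
  calc dist γ.cls (β x).cls = dGamma γ (β x) := LoopClass.dist_cls _ _
    _ ≤ dist γ.restrictIcc (β x).restrictIcc := dGamma_le_dist_restrictIcc _ _
    _ < δ := by rwa [hβT x hxT]

theorem Set.Finite.exists_pos_injOn_of_dist_lt {α : Type*} [MetricSpace α] {s : Set α}
    (hs : s.Finite) : ∃ δ > 0, ∀ f : α → α, (∀ x ∈ s, dist x (f x) < δ) → s.InjOn f := by
  have hsep : ∀ᶠ δ in 𝓝[>] (0 : ℝ), ∀ p ∈ {p ∈ s ×ˢ s | p.1 ≠ p.2}, δ < dist p.1 p.2 / 2 := by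
    rw [eventually_all_finite ((hs.prod hs).subset (sep_subset _ _))]
    rintro ⟨x, y⟩ ⟨-, hxy⟩
    exact nhdsWithin_le_nhds (eventually_lt_nhds (half_pos (dist_pos.2 hxy)))
  obtain ⟨δ, hδ, hδ0⟩ := (hsep.and self_mem_nhdsWithin).exists
  refine ⟨δ, hδ0, fun f hf x hx y hy hxy => by_contra fun hne => ?_⟩
  have hle : dist x y ≤ dist x (f x) + dist y (f y) := by
    rw [hxy]
    exact dist_triangle_right _ _ _
  linarith [hδ (x, y) ⟨⟨hx, hy⟩, hne⟩, hf x hx, hf y hy]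

theorem mem_loopCollections_of_finite {K : Set ℂ} {G : Set LoopClass} (hG : G.Finite)
    (h : ∀ c ∈ G, ¬ c.IsTrivial ∧ c.image ⊆ K) : G ∈ LoopCollections K :=
  ⟨hG.countable, h, fun _ _ => hG.subset (sep_subset _ _)⟩

theorem dX_image_le {F s : Set LoopClass} {f : LoopClass → LoopClass} {r : ℝ} (hsF : s ⊆ F)
    (hf : s.InjOn f) (hr : 0 ≤ r) (hmatched : ∀ c ∈ s, dist c (f c) ≤ r)
    (hunmatched : ∀ c ∈ F \ s, c.diam / 2 ≤ r) : dX F (f '' s) ≤ r := by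
  refine csInf_le ⟨0, fun _ h => h.1⟩ ⟨hr, (fun c => (c, f c)) '' s, ⟨?_, ?_, ?_⟩, ?_, ?_⟩
  · rintro _ ⟨c, hc, rfl⟩
    exact ⟨hsF hc, c, hc, rfl⟩
  · rintro _ ⟨c, -, rfl⟩ _ ⟨c', -, rfl⟩ (h : c = c')
    rw [h]
  · rintro _ ⟨c, hc, rfl⟩ _ ⟨c', hc', rfl⟩ (h : f c = f c')
    rw [hf hc hc' h]
  · rintro _ ⟨c, hc, rfl⟩
    exact hmatched c hc
  · rintro c (⟨hcF, hc⟩ | ⟨⟨c', hc', rfl⟩, hc⟩)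
    · exact hunmatched c ⟨hcF, fun hcs => hc _ ⟨c, hcs, rfl⟩ rfl⟩
    · exact absurd rfl (hc _ ⟨c', hc', rfl⟩)

theorem dX_separable_general (K : Set ℂ) :
    ∃ S : Set (XSpace K), S.Countable ∧
      ∀ F : XSpace K, ∀ ε : ℝ, 0 < ε → ∃ G ∈ S, XSpace.dist F G < ε := by
  obtain ⟨C, hCc, hCK, hC⟩ := exists_countable_dense_classes K
  refine ⟨{G | G.1.Finite ∧ G.1 ⊆ C},
    (countable_ofPred_finite_subset hCc).preimage Subtype.val_injective, fun F ε hε => ?_⟩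
  obtain ⟨-, hFK, hFfin⟩ := F.2
  set s := {c ∈ F.1 | ε < c.diam}
  have hs : s.Finite := hFfin ε hε
  obtain ⟨δ₀, hδ₀, hinj⟩ := hs.exists_pos_injOn_of_dist_lt
  choose! f hfC hf using fun c (hc : c ∈ s) =>
    hC c (hFK c hc.1).2 (min (ε / 2) δ₀) (lt_min (half_pos hε) hδ₀)
  have hG : f '' s ∈ LoopCollections K := mem_loopCollections_of_finite (hs.image f) <| by
    rintro _ ⟨c, hc, rfl⟩
    refine ⟨LoopClass.not_isTrivial_of_two_mul_dist_lt (c := c) ?_, hCK _ (hfC c hc)⟩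
    linarith [hc.2, (hf c hc).trans_le (min_le_left _ _)]
  refine ⟨⟨f '' s, hG⟩, ⟨hs.image f, image_subset_iff.2 hfC⟩, ?_⟩
  calc XSpace.dist F ⟨f '' s, hG⟩ ≤ ε / 2 :=
        dX_image_le (sep_subset _ _) (hinj f fun c hc => (hf c hc).trans_le (min_le_right _ _))
          (half_pos hε).le (fun c hc => ((hf c hc).trans_le (min_le_left _ _)).le)
          fun c hc => by linarith [not_lt.1 fun h => hc.2 ⟨hc.1, h⟩]
    _ < ε := half_lt_self hε

/-- For every compact `K ⊂ ℂ`, the metric space `(X(K), d_X)` is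
separable. -/
theorem dX_separable (K : Set ℂ) (hK : IsCompact K) :
    ∃ S : Set (XSpace K), S.Countable ∧
      ∀ F : XSpace K, ∀ ε : ℝ, 0 < ε → ∃ G ∈ S, XSpace.dist F G < ε :=
  dX_separable_general K
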